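/- arXiv:1812.01452 — 4 statements merged into one kernel-verified Lean document; each statement's English description precedes it below -/
import Mathlib

section
/- Let k be a commutative ring, λ ∈ k, and A an associative unital k-algebra equipped with a k-linear map Δ : A → A ⊗[k] A that is coassociative ((Δ⊗id)∘Δ = (id⊗Δ)∘Δ) and satisfies the weight-λ derivation condition Δ(ab) = a·Δ(b) + Δ(a)·b + λ(a⊗b) for all a, b ∈ A. For a ∈ A let T_a : A ⊗[k] A → A be the k-linear map determined by u ⊗ v ↦ u·a·v, and define a binary operation ▷ on A by a ▷ b = T_a(Δ(b)) (in Sweedler notation, a ▷ b = Σ_{(b)} b₍₁₎ a b₍₂₎). Then ▷ satisfies the (left) pre-Lie identity: for all a, b, c ∈ A, (a ▷ b) ▷ c − a ▷ (b ▷ c) = (b ▷ a) ▷ c − b ▷ (a ▷ c). -/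
open TensorProduct

/-- From an infinitesimal unitary bialgebra of weight `λ`, the operation
`a ▷ b = Σ_{(b)} b₍₁₎ a b₍₂₎` satisfies the (left) pre-Lie identity. -/
theorem preLie_of_weighted_infinitesimal_bialgebra
    {k : Type*} [CommRing k] {A : Type*} [Ring A] [Algebra k A]
    (lam : k) (Δ : A →ₗ[k] A ⊗[k] A)
    (hcoassoc : ∀ a : A,
      (TensorProduct.assoc k A A A) (LinearMap.rTensor A Δ (Δ a))
        = LinearMap.lTensor A Δ (Δ a))
    (hder : ∀ a b : A,
      Δ (a * b) = (a ⊗ₜ[k] (1 : A)) * Δ b + Δ a * ((1 : A) ⊗ₜ[k] b)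
        + lam • (a ⊗ₜ[k] b))
    (T : A → A ⊗[k] A →ₗ[k] A)
    (hT : ∀ a u v : A, T a (u ⊗ₜ[k] v) = u * a * v)
    (op : A → A → A) (hop : ∀ a b : A, op a b = T a (Δ b)) :
    ∀ a b c : A,
      op (op a b) c - op a (op b c) = op (op b a) c - op b (op a c) := by
  have hTl : ∀ (a w : A) (t : A ⊗[k] A), T a ((w ⊗ₜ[k] (1:A)) * t) = w * T a t := by
    intro a w t
    induction t using TensorProduct.induction_on with
    | zero => simp
    | tmul y z => simp [Algebra.TensorProduct.tmul_mul_tmul, hT, mul_assoc]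
    | add s t hs ht => simp [mul_add, hs, ht]
  have hTr : ∀ (a w : A) (t : A ⊗[k] A), T a (t * ((1:A) ⊗ₜ[k] w)) = T a t * w := by
    intro a w t
    induction t using TensorProduct.induction_on with
    | zero => simp
    | tmul y z => simp [Algebra.TensorProduct.tmul_mul_tmul, hT, mul_assoc]
    | add s t hs ht => simp [add_mul, hs, ht]
  set P : A → A → (A ⊗[k] (A ⊗[k] A)) →ₗ[k] A := fun a b =>
    TensorProduct.lift ((LinearMap.lcomp k A (T b)).comp
      ((LinearMap.mul k A).comp (LinearMap.mulRight k a))) with hPdef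
  have hP : ∀ (a b x : A) (t : A ⊗[k] A), P a b (x ⊗ₜ[k] t) = x * a * T b t := by
    intro a b x t; simp [hPdef]
  have hPassoc : ∀ (a b v : A) (t : A ⊗[k] A),
      P a b ((TensorProduct.assoc k A A A) (t ⊗ₜ[k] v)) = T a t * b * v := by
    intro a b v t
    induction t using TensorProduct.induction_on with
    | zero => rw [zero_tmul, map_zero, map_zero, map_zero, zero_mul, zero_mul]
    | tmul x y => simp [hP, hT, mul_assoc]
    | add s t hs ht =>
      rw [add_tmul, map_add, map_add, hs, ht, map_add, add_mul, add_mul]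
  have key : ∀ (a b : A) (x : A ⊗[k] A),
      T a (Δ (T b x)) = T (op a b) x + P b a (LinearMap.lTensor A Δ x)
        + P a b ((TensorProduct.assoc k A A A) (LinearMap.rTensor A Δ x))
        + lam • T (b*a) x + lam • T (a*b) x := by
    intro a b x
    induction x using TensorProduct.induction_on with
    | zero => simp
    | tmul u v =>
      rw [hT, hder (u*b) v, hder u b]
      simp only [map_add, map_smul, add_mul, smul_mul_assoc,
        Algebra.TensorProduct.tmul_mul_tmul, one_mul, mul_one,
        LinearMap.lTensor_tmul, LinearMap.rTensor_tmul,
        hTl, hTr, hT, hP, hPassoc]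
      rw [hop]
      simp only [mul_assoc]
      abel
    | add s t hs ht =>
      simp only [map_add, hs, ht, smul_add]
      abel
  intro a b c
  have ha : op a (op b c) = op (op a b) c
      + P b a (LinearMap.lTensor A Δ (Δ c)) + P a b (LinearMap.lTensor A Δ (Δ c))
      + lam • op (b*a) c + lam • op (a*b) c := by
    rw [hop a (op b c), hop b c, key a b (Δ c), hcoassoc c,
      ← hop (op a b) c, ← hop (b*a) c, ← hop (a*b) c]
  have hb : op b (op a c) = op (op b a) c
      + P a b (LinearMap.lTensor A Δ (Δ c)) + P b a (LinearMap.lTensor A Δ (Δ c))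
      + lam • op (a*b) c + lam • op (b*a) c := by
    rw [hop b (op a c), hop a c, key b a (Δ c), hcoassoc c,
      ← hop (op b a) c, ← hop (a*b) c, ← hop (b*a) c]
  rw [ha, hb]
  abel
end

section
/- Let k be a commutative ring, λ ∈ k, X a set, and A = MonoidAlgebra k (FreeMonoid X). Suppose Δ : A → A ⊗[k] A is a k-linear map such that Δ(x) = x ⊗ x for every single-letter word x ∈ X, and such that for every letter x₁ ∈ X and every nonempty word x₂⋯x_m (m ≥ 2), Δ(x₁x₂⋯x_m) = x₁·Δ(x₂⋯x_m) + Δ(x₁)·(x₂⋯x_m) + λ (x₁ ⊗ x₂⋯x_m). Then for every m ≥ 1 and all letters x₁, …, x_m ∈ X, the closed formula holds: Δ(x₁⋯x_m) = Σ_{i=1}^{m} (x₁⋯x_i) ⊗ (x_i⋯x_m) + λ Σ_{i=1}^{m−1} (x₁⋯x_i) ⊗ (x_{i+1}⋯x_m), where in the first sum the letter x_i occurs in both tensor factors. -/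
/-! Both sums on the right satisfy the recursion: splitting off the first term of each, the
remaining terms are `(x₁ ⊗ 1)` times the corresponding sum for `x₂⋯x_m`, while the split-off term
is `x₁ ⊗ x₁⋯x_m = Δ(x₁) · (x₂⋯x_m)` in the first sum and `x₁ ⊗ x₂⋯x_m` in the second. Induction on
the word then gives the formula. -/

open TensorProduct

/-- The basis element of the monoid algebra of the free monoid corresponding to
the word `x₁ ⋯ x_m` given by the list `l = [x₁, …, x_m]`. -/
noncomputable def word (k : Type*) [CommRing k] {X : Type*} (l : List X) :
    MonoidAlgebra k (FreeMonoid X) :=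
  MonoidAlgebra.of k (FreeMonoid X) (FreeMonoid.ofList l)

namespace FreeMonoidAlgebra

variable {k : Type*} [CommRing k] {X : Type*}

local notation "A" => MonoidAlgebra k (FreeMonoid X)

theorem word_append (l₁ l₂ : List X) : word k (l₁ ++ l₂) = word k l₁ * word k l₂ := by
  simp only [word, ← map_mul]
  rfl

theorem word_cons (x : X) (l : List X) : word k (x :: l) = word k [x] * word k l :=
  word_append [x] l

variable (k) in
noncomputable def overlapDeconcat (l : List X) : A ⊗[k] A :=
  ∑ i ∈ Finset.range l.length, word k (l.take (i + 1)) ⊗ₜ[k] word k (l.drop i)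

variable (k) in
noncomputable def properDeconcat (l : List X) : A ⊗[k] A :=
  ∑ i ∈ Finset.range (l.length - 1), word k (l.take (i + 1)) ⊗ₜ[k] word k (l.drop (i + 1))

theorem overlapDeconcat_cons (x : X) (l : List X) :
    overlapDeconcat k (x :: l)
      = (word k [x] ⊗ₜ[k] (1 : A)) * overlapDeconcat k l + word k [x] ⊗ₜ[k] word k (x :: l) := by
  simp only [overlapDeconcat, List.length_cons, Finset.sum_range_succ', Finset.mul_sum,
    Algebra.TensorProduct.tmul_mul_tmul, one_mul, List.take_succ_cons, List.drop_succ_cons,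
    ← word_cons, List.take_zero, List.drop_zero]

theorem properDeconcat_cons (x : X) {l : List X} (hl : l ≠ []) :
    properDeconcat k (x :: l)
      = (word k [x] ⊗ₜ[k] (1 : A)) * properDeconcat k l + word k [x] ⊗ₜ[k] word k l := by
  obtain ⟨n, hn⟩ := Nat.exists_eq_succ_of_ne_zero (List.length_pos_iff.mpr hl).ne'
  simp only [properDeconcat, List.length_cons, hn, Nat.succ_sub_one,
    Finset.sum_range_succ', Finset.mul_sum, Algebra.TensorProduct.tmul_mul_tmul, one_mul,
    List.take_succ_cons, List.drop_succ_cons, ← word_cons, List.take_zero, List.drop_zero]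

end FreeMonoidAlgebra

open FreeMonoidAlgebra in
/-- If a linear map `Δ` on the monoid algebra of the free monoid on `X`
satisfies `Δ(x) = x ⊗ x` on letters and the weight-`λ` recursion
`Δ(x₁ x₂ ⋯ x_m) = x₁ · Δ(x₂ ⋯ x_m) + Δ(x₁) · (x₂ ⋯ x_m) + λ x₁ ⊗ x₂ ⋯ x_m`
for nonempty tails, then the closed formula
`Δ(x₁⋯x_m) = Σ_{i=1}^m (x₁⋯x_i) ⊗ (x_i⋯x_m) + λ Σ_{i=1}^{m−1} (x₁⋯x_i) ⊗ (x_{i+1}⋯x_m)`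
holds for every nonempty word. -/
theorem closed_formula_of_recursive_coproduct
    {k : Type*} [CommRing k] {X : Type*} (lam : k)
    (Δ : MonoidAlgebra k (FreeMonoid X) →ₗ[k]
      MonoidAlgebra k (FreeMonoid X) ⊗[k] MonoidAlgebra k (FreeMonoid X))
    (hletter : ∀ x : X, Δ (word k [x]) = word k [x] ⊗ₜ[k] word k [x])
    (hrec : ∀ (x : X) (l : List X), l ≠ [] →
      Δ (word k (x :: l))
        = (word k [x] ⊗ₜ[k] (1 : MonoidAlgebra k (FreeMonoid X))) * Δ (word k l)
          + Δ (word k [x]) * ((1 : MonoidAlgebra k (FreeMonoid X)) ⊗ₜ[k] word k l)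
          + lam • (word k [x] ⊗ₜ[k] word k l)) :
    ∀ l : List X, l ≠ [] →
      Δ (word k l)
        = (∑ i ∈ Finset.range l.length,
            word k (l.take (i + 1)) ⊗ₜ[k] word k (l.drop i))
          + lam • ∑ i ∈ Finset.range (l.length - 1),
            word k (l.take (i + 1)) ⊗ₜ[k] word k (l.drop (i + 1)) := by
  intro l hl
  change Δ (word k l) = overlapDeconcat k l + lam • properDeconcat k l
  induction l, hl using List.recNeNil with
  | singleton x => simp [hletter, overlapDeconcat, properDeconcat]
  | cons x l hl ih =>
    have hlast : Δ (word k [x]) * (1 ⊗ₜ[k] word k l) = word k [x] ⊗ₜ[k] word k (x :: l) := by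
      rw [hletter, Algebra.TensorProduct.tmul_mul_tmul, mul_one, ← word_cons]
    rw [hrec x l hl, ih, hlast, overlapDeconcat_cons, properDeconcat_cons x hl, mul_add,
      mul_smul_comm, smul_add]
    abel
end

section
/- Let k be a commutative ring, λ ∈ k, X a set, and A = MonoidAlgebra k (FreeMonoid X). Let Δ_λ : A → A ⊗[k] A be the k-linear map defined on the basis of words by Δ_λ(1) = −λ(1⊗1) and, for m ≥ 1, Δ_λ(x₁⋯x_m) = Σ_{i=1}^{m} (x₁⋯x_i) ⊗ (x_i⋯x_m) + λ Σ_{i=1}^{m−1} (x₁⋯x_i) ⊗ (x_{i+1}⋯x_m). Then Δ_λ satisfies the weight-λ derivation condition on all of A: Δ_λ(a b) = a·Δ_λ(b) + Δ_λ(a)·b + λ (a ⊗ b) for all a, b ∈ A. -/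
/-!
Both sides of the identity are `k`-bilinear in `(a, b)`, so it suffices to check it on pairs of
words `p, q`. If one of them is empty, the term `λ (a ⊗ b)` is cancelled by `Δ(1) = -λ (1 ⊗ 1)`.
If both are nonempty, the cuts of `pq` are the cuts of `p` (followed by `q`), the cuts of `q`
(preceded by `p`) and, in the `λ`-sum only, the cut between `p` and `q`, which contributes
`λ (p ⊗ q)`.
-/

open TensorProduct

open Finset Algebra.TensorProduct

section WeightedLeibniz

variable {k A : Type*} [CommRing k] [Ring A] [Algebra k A] {lam : k} {Δ : A →ₗ[k] A ⊗[k] A}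

theorem weighted_leibniz_one_left (hone : Δ 1 = -(lam • ((1 : A) ⊗ₜ[k] (1 : A)))) (b : A) :
    Δ (1 * b) = ((1 : A) ⊗ₜ[k] (1 : A)) * Δ b + Δ 1 * (1 ⊗ₜ[k] b) + lam • ((1 : A) ⊗ₜ[k] b) := by
  rw [one_mul, hone, ← one_def, one_mul, neg_mul, smul_mul_assoc, one_mul, neg_add_cancel_right]

theorem weighted_leibniz_one_right (hone : Δ 1 = -(lam • ((1 : A) ⊗ₜ[k] (1 : A)))) (a : A) :
    Δ (a * 1) = (a ⊗ₜ[k] 1) * Δ 1 + Δ a * ((1 : A) ⊗ₜ[k] (1 : A)) + lam • (a ⊗ₜ[k] (1 : A)) := by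
  rw [mul_one, hone, ← one_def, mul_one, mul_neg, mul_smul_comm, mul_one]
  abel

end WeightedLeibniz

theorem MonoidAlgebra.weighted_leibniz_of_basis {k G : Type*} [CommRing k] [Monoid G] (lam : k)
    (Δ : MonoidAlgebra k G →ₗ[k] MonoidAlgebra k G ⊗[k] MonoidAlgebra k G)
    (h : ∀ g g' : G, Δ (of k G g * of k G g') = (of k G g ⊗ₜ[k] 1) * Δ (of k G g')
      + Δ (of k G g) * (1 ⊗ₜ[k] of k G g') + lam • (of k G g ⊗ₜ[k] of k G g'))
    (a b : MonoidAlgebra k G) :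
    Δ (a * b) = (a ⊗ₜ[k] 1) * Δ b + Δ a * (1 ⊗ₜ[k] b) + lam • (a ⊗ₜ[k] b) := by
  let mul₂ := LinearMap.mul k (MonoidAlgebra k G ⊗[k] MonoidAlgebra k G)
  have bilinear_eq : (LinearMap.mul k _).compr₂ Δ
      = (mul₂.comp includeLeft.toLinearMap).compl₂ Δ + mul₂.compl₁₂ Δ includeRight.toLinearMap
        + lam • TensorProduct.mk k _ _ := by
    ext g g'
    simpa [mul₂] using h g g'
  simpa [mul₂] using LinearMap.congr_fun₂ bilinear_eq a b

section Words

variable {k : Type*} [CommRing k] {X : Type*}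

theorem word_mul (p q : List X) : word k p * word k q = word k (p ++ q) := by
  simp only [word, ← map_mul]
  rfl

theorem word_nil : word k ([] : List X) = 1 := by
  simp only [word, FreeMonoid.ofList_nil, map_one]

theorem of_eq_word_toList (w : FreeMonoid X) :
    MonoidAlgebra.of k (FreeMonoid X) w = word k w.toList := by
  rw [word, FreeMonoid.ofList_toList]

variable (k) in
noncomputable def overlapCuts (l : List X) :
    MonoidAlgebra k (FreeMonoid X) ⊗[k] MonoidAlgebra k (FreeMonoid X) :=
  ∑ i ∈ range l.length, word k (l.take (i + 1)) ⊗ₜ[k] word k (l.drop i)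

variable (k) in
noncomputable def properCuts (l : List X) :
    MonoidAlgebra k (FreeMonoid X) ⊗[k] MonoidAlgebra k (FreeMonoid X) :=
  ∑ i ∈ range (l.length - 1), word k (l.take (i + 1)) ⊗ₜ[k] word k (l.drop (i + 1))

theorem overlapCuts_append (p q : List X) :
    overlapCuts k (p ++ q) = overlapCuts k p * (1 ⊗ₜ[k] word k q)
      + (word k p ⊗ₜ[k] 1) * overlapCuts k q := by
  simp only [overlapCuts, List.length_append, sum_range_add, sum_mul, mul_sum,
    tmul_mul_tmul, mul_one, one_mul, word_mul]
  congr 1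
  · refine sum_congr rfl fun i hi => ?_
    have hi : i + 1 ≤ p.length := mem_range.mp hi
    rw [List.take_append_of_le_length hi, List.drop_append_of_le_length (by omega)]
  · refine sum_congr rfl fun j _ => ?_
    rw [add_assoc, List.take_length_add_append, List.drop_length_add_append]

theorem properCuts_append {p q : List X} (hp : p ≠ []) (hq : q ≠ []) :
    properCuts k (p ++ q) = properCuts k p * (1 ⊗ₜ[k] word k q) + word k p ⊗ₜ[k] word k q
      + (word k p ⊗ₜ[k] 1) * properCuts k q := by
  obtain ⟨m, hm⟩ : ∃ m, p.length = m + 1 := Nat.exists_eq_succ_of_ne_zero (by simpa using hp)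
  obtain ⟨n, hn⟩ : ∃ n, q.length = n + 1 := Nat.exists_eq_succ_of_ne_zero (by simpa using hq)
  have hlen : (p ++ q).length - 1 = m + 1 + n := by simp only [List.length_append]; omega
  simp only [properCuts, hlen, hm, hn, Nat.add_sub_cancel, sum_range_add, sum_range_succ,
    sum_mul, mul_sum, tmul_mul_tmul, mul_one, one_mul, word_mul]
  rw [← hm]
  congr 2
  · refine sum_congr rfl fun i hi => ?_
    have hi : i + 1 ≤ p.length := by have := mem_range.mp hi; omega
    rw [List.take_append_of_le_length hi, List.drop_append_of_le_length hi]
  · rw [List.take_left, List.drop_left]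
  · funext j
    rw [add_assoc, List.take_length_add_append, List.drop_length_add_append]

theorem weighted_leibniz_word {lam : k}
    {Δ : MonoidAlgebra k (FreeMonoid X) →ₗ[k]
      MonoidAlgebra k (FreeMonoid X) ⊗[k] MonoidAlgebra k (FreeMonoid X)}
    (hone : Δ 1 = -(lam • ((1 : MonoidAlgebra k (FreeMonoid X)) ⊗ₜ[k] 1)))
    (hword : ∀ l : List X, l ≠ [] → Δ (word k l) = overlapCuts k l + lam • properCuts k l)
    (p q : List X) :
    Δ (word k p * word k q) = (word k p ⊗ₜ[k] 1) * Δ (word k q)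
      + Δ (word k p) * (1 ⊗ₜ[k] word k q) + lam • (word k p ⊗ₜ[k] word k q) := by
  rcases eq_or_ne p [] with rfl | hp
  · rw [word_nil]
    exact weighted_leibniz_one_left hone _
  rcases eq_or_ne q [] with rfl | hq
  · rw [word_nil]
    exact weighted_leibniz_one_right hone _
  rw [word_mul, hword _ (List.append_ne_nil_of_left_ne_nil hp q), hword p hp, hword q hq,
    overlapCuts_append, properCuts_append hp hq]
  simp only [add_mul, mul_add, smul_add, mul_smul_comm, smul_mul_assoc]
  abel

end Words

/-- The linear map `Δ_λ` on the monoid algebra of the free monoid on `X`,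
defined on the word basis by `Δ_λ(1) = -λ (1 ⊗ 1)` and
`Δ_λ(x₁⋯x_m) = Σ_{i=1}^m (x₁⋯x_i) ⊗ (x_i⋯x_m) + λ Σ_{i=1}^{m−1} (x₁⋯x_i) ⊗ (x_{i+1}⋯x_m)`,
satisfies the weight-`λ` derivation condition on all of the algebra. -/
theorem weighted_derivation_of_word_coproduct
    {k : Type*} [CommRing k] {X : Type*} (lam : k)
    (Δ : MonoidAlgebra k (FreeMonoid X) →ₗ[k]
      MonoidAlgebra k (FreeMonoid X) ⊗[k] MonoidAlgebra k (FreeMonoid X))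
    (hone : Δ 1 = -(lam • ((1 : MonoidAlgebra k (FreeMonoid X))
      ⊗ₜ[k] (1 : MonoidAlgebra k (FreeMonoid X)))))
    (hword : ∀ l : List X, l ≠ [] →
      Δ (word k l)
        = (∑ i ∈ Finset.range l.length,
            word k (l.take (i + 1)) ⊗ₜ[k] word k (l.drop i))
          + lam • ∑ i ∈ Finset.range (l.length - 1),
            word k (l.take (i + 1)) ⊗ₜ[k] word k (l.drop (i + 1))) :
    ∀ a b : MonoidAlgebra k (FreeMonoid X),
      Δ (a * b) = (a ⊗ₜ[k] (1 : MonoidAlgebra k (FreeMonoid X))) * Δ b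
        + Δ a * ((1 : MonoidAlgebra k (FreeMonoid X)) ⊗ₜ[k] b)
        + lam • (a ⊗ₜ[k] b) := by
  intro a b
  refine MonoidAlgebra.weighted_leibniz_of_basis lam Δ (fun g g' => ?_) a b
  rw [of_eq_word_toList, of_eq_word_toList]
  exact weighted_leibniz_word hone hword _ _
end

section
/- Let k be a commutative ring, λ ∈ k, X a set, and A = MonoidAlgebra k (FreeMonoid X) with the k-linear map Δ_λ : A → A ⊗[k] A defined on the basis of words by Δ_λ(1) = −λ(1⊗1) and, for m ≥ 1, Δ_λ(x₁⋯x_m) = Σ_{i=1}^{m} (x₁⋯x_i) ⊗ (x_i⋯x_m) + λ Σ_{i=1}^{m−1} (x₁⋯x_i) ⊗ (x_{i+1}⋯x_m). Let H be an associative unital k-algebra with a k-linear map Δ_H : H → H ⊗[k] H that is coassociative and satisfies Δ_H(ab) = a·Δ_H(b) + Δ_H(a)·b + λ(a⊗b) for all a, b ∈ H. Let f : X → H be a map whose images are group-like, i.e. Δ_H(f(x)) = f(x) ⊗ f(x) for every x ∈ X, and let φ : A → H be the unique k-algebra homomorphism with φ(x) = f(x) for every single-letter word x ∈ X. Then φ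 is a coalgebra morphism: Δ_H ∘ φ = (φ ⊗ φ) ∘ Δ_λ. -/
/-!
Both sides are linear, so it suffices to compare them on words. The algebra map sends the word
`x₁ ⋯ xₘ` to the product `f x₁ ⋯ f xₘ` of group-like elements. Peeling off the first factor with
the weighted Leibniz rule shows by induction that `Δ_H` of a nonempty product `g₁ ⋯ gₘ` of
group-like elements is `∑ (g₁ ⋯ gᵢ) ⊗ (gᵢ ⋯ gₘ) + λ ∑ (g₁ ⋯ gᵢ) ⊗ (gᵢ₊₁ ⋯ gₘ)`, the formula defining
`Δ_λ`; on the empty word both sides are `-λ (1 ⊗ 1)`, which the Leibniz rule forces for `Δ_H 1`.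
-/

open TensorProduct

section Deconcatenation

variable {k : Type*} [CommRing k] {A B : Type*} [Ring A] [Algebra k A] [Ring B] [Algebra k B]

def IsWeightedDerivation (lam : k) (Δ : A →ₗ[k] A ⊗[k] A) : Prop :=
  ∀ a b : A, Δ (a * b) = (a ⊗ₜ[k] (1 : A)) * Δ b + Δ a * ((1 : A) ⊗ₜ[k] b) + lam • (a ⊗ₜ[k] b)

variable (k) in
noncomputable def overlapDeconcat (l : List A) : A ⊗[k] A :=
  ∑ i ∈ Finset.range l.length, (l.take (i + 1)).prod ⊗ₜ[k] (l.drop i).prod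

variable (k) in
noncomputable def reducedDeconcat (l : List A) : A ⊗[k] A :=
  ∑ i ∈ Finset.range (l.length - 1), (l.take (i + 1)).prod ⊗ₜ[k] (l.drop (i + 1)).prod

theorem overlapDeconcat_cons (x : A) (t : List A) :
    overlapDeconcat k (x :: t)
      = (x ⊗ₜ[k] (1 : A)) * overlapDeconcat k t + x ⊗ₜ[k] (x :: t).prod := by
  simp only [overlapDeconcat, List.length_cons, Finset.sum_range_succ', Finset.mul_sum,
    List.take_succ_cons, List.drop_succ_cons, Algebra.TensorProduct.tmul_mul_tmul, one_mul,
    List.prod_cons, List.take_zero, List.prod_nil, mul_one, List.drop_zero]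

theorem reducedDeconcat_cons (x : A) {t : List A} (ht : t ≠ []) :
    reducedDeconcat k (x :: t)
      = (x ⊗ₜ[k] (1 : A)) * reducedDeconcat k t + x ⊗ₜ[k] t.prod := by
  obtain ⟨n, hn⟩ := Nat.exists_eq_add_one.mpr (List.length_pos_iff.mpr ht)
  simp only [reducedDeconcat, List.length_cons, Nat.add_sub_cancel, hn, Finset.sum_range_succ',
    Finset.mul_sum, List.take_succ_cons, List.drop_succ_cons, Algebra.TensorProduct.tmul_mul_tmul,
    one_mul, List.prod_cons, List.take_zero, List.prod_nil, mul_one, List.drop_zero]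

theorem IsWeightedDerivation.map_one {lam : k} {Δ : A →ₗ[k] A ⊗[k] A}
    (hΔ : IsWeightedDerivation lam Δ) : Δ 1 = -(lam • ((1 : A) ⊗ₜ[k] (1 : A))) := by
  have h := hΔ 1 1
  rw [one_mul, ← Algebra.TensorProduct.one_def, one_mul, mul_one, add_assoc, left_eq_add] at h
  exact eq_neg_of_add_eq_zero_left h

theorem IsWeightedDerivation.map_list_prod {lam : k} {Δ : A →ₗ[k] A ⊗[k] A}
    (hΔ : IsWeightedDerivation lam Δ) {l : List A} (hl : l ≠ [])
    (hgrp : ∀ x ∈ l, Δ x = x ⊗ₜ[k] x) :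
    Δ l.prod = overlapDeconcat k l + lam • reducedDeconcat k l := by
  induction l with
  | nil => contradiction
  | cons x t ih =>
    rcases eq_or_ne t [] with rfl | ht
    · simp [overlapDeconcat, reducedDeconcat, hgrp x]
    rw [List.prod_cons, hΔ, ih ht fun y hy => hgrp y (List.mem_cons_of_mem x hy),
      hgrp x List.mem_cons_self, overlapDeconcat_cons, reducedDeconcat_cons x ht,
      Algebra.TensorProduct.tmul_mul_tmul, mul_one, List.prod_cons, mul_add, mul_smul_comm,
      smul_add]
    abel

theorem map_overlapDeconcat (ψ : A →ₐ[k] B) (l : List A) :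
    TensorProduct.map ψ.toLinearMap ψ.toLinearMap (overlapDeconcat k l)
      = overlapDeconcat k (l.map ψ) := by
  simp [overlapDeconcat, map_list_prod, List.map_take, List.map_drop]

theorem map_reducedDeconcat (ψ : A →ₐ[k] B) (l : List A) :
    TensorProduct.map ψ.toLinearMap ψ.toLinearMap (reducedDeconcat k l)
      = reducedDeconcat k (l.map ψ) := by
  simp [reducedDeconcat, map_list_prod, List.map_take, List.map_drop]

end Deconcatenation

section Words

variable (k : Type*) [CommRing k] {X : Type*}

theorem word_cons (x : X) (t : List X) : word k (x :: t) = word k [x] * word k t :=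
  map_mul (MonoidAlgebra.of k (FreeMonoid X)) (FreeMonoid.of x) (FreeMonoid.ofList t)

theorem word_eq_prod (l : List X) : word k l = (l.map fun x => word k [x]).prod := by
  induction l with
  | nil => rfl
  | cons x t ih => rw [word_cons, ih, List.map_cons, List.prod_cons]

theorem overlapDeconcat_map_word (l : List X) :
    overlapDeconcat k (l.map fun x => word k [x])
      = ∑ i ∈ Finset.range l.length, word k (l.take (i + 1)) ⊗ₜ[k] word k (l.drop i) := by
  simp [overlapDeconcat, ← List.map_take, ← List.map_drop, ← word_eq_prod]

theorem reducedDeconcat_map_word (l : List X) :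
    reducedDeconcat k (l.map fun x => word k [x])
      = ∑ i ∈ Finset.range (l.length - 1),
          word k (l.take (i + 1)) ⊗ₜ[k] word k (l.drop (i + 1)) := by
  simp [reducedDeconcat, ← List.map_take, ← List.map_drop, ← word_eq_prod]

end Words

theorem algebra_hom_is_coalgebra_morphism_general
    {k : Type*} [CommRing k] {X : Type*} (lam : k)
    (Δ : MonoidAlgebra k (FreeMonoid X) →ₗ[k]
      MonoidAlgebra k (FreeMonoid X) ⊗[k] MonoidAlgebra k (FreeMonoid X))
    (hone : Δ 1 = -(lam • ((1 : MonoidAlgebra k (FreeMonoid X))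
      ⊗ₜ[k] (1 : MonoidAlgebra k (FreeMonoid X)))))
    (hword : ∀ l : List X, l ≠ [] →
      Δ (word k l)
        = (∑ i ∈ Finset.range l.length,
            word k (l.take (i + 1)) ⊗ₜ[k] word k (l.drop i))
          + lam • ∑ i ∈ Finset.range (l.length - 1),
            word k (l.take (i + 1)) ⊗ₜ[k] word k (l.drop (i + 1)))
    {H : Type*} [Ring H] [Algebra k H]
    (ΔH : H →ₗ[k] H ⊗[k] H)
    (hder : ∀ a b : H,
      ΔH (a * b) = (a ⊗ₜ[k] (1 : H)) * ΔH b + ΔH a * ((1 : H) ⊗ₜ[k] b)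
        + lam • (a ⊗ₜ[k] b))
    (f : X → H) (hf : ∀ x : X, ΔH (f x) = f x ⊗ₜ[k] f x)
    (φ : MonoidAlgebra k (FreeMonoid X) →ₐ[k] H)
    (hφ : ∀ x : X, φ (word k [x]) = f x) :
    ∀ a : MonoidAlgebra k (FreeMonoid X),
      ΔH (φ a) = TensorProduct.map φ.toLinearMap φ.toLinearMap (Δ a) := by
  suffices ΔH ∘ₗ φ.toLinearMap = TensorProduct.map φ.toLinearMap φ.toLinearMap ∘ₗ Δ from
    fun a => congr($this a)
  ext m
  change ΔH (φ (word k m.toList))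
    = TensorProduct.map φ.toLinearMap φ.toLinearMap (Δ (word k m.toList))
  have hletters : (φ ∘ fun x => word k [x]) = f := funext hφ
  rcases eq_or_ne m.toList [] with hnil | hne
  · rw [hnil, show word k ([] : List X) = 1 from rfl, hone, map_one,
      IsWeightedDerivation.map_one hder]
    simp
  rw [hword _ hne, ← overlapDeconcat_map_word, ← reducedDeconcat_map_word, map_add, map_smul,
    map_overlapDeconcat, map_reducedDeconcat, List.map_map, word_eq_prod, map_list_prod,
    List.map_map, hletters]
  exact IsWeightedDerivation.map_list_prod hder (by simpa using hne)
    (by simpa using fun x _ => hf x)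

/-- Universal property (coalgebra-morphism part): if `H` is an infinitesimal
unitary bialgebra of weight `λ`, `f : X → H` has group-like images, and
`φ` is the algebra homomorphism from the monoid algebra of the free monoid on
`X` to `H` extending `f`, then `φ` is compatible with the coproducts:
`Δ_H ∘ φ = (φ ⊗ φ) ∘ Δ_λ`. -/
theorem algebra_hom_is_coalgebra_morphism
    {k : Type*} [CommRing k] {X : Type*} (lam : k)
    (Δ : MonoidAlgebra k (FreeMonoid X) →ₗ[k]
      MonoidAlgebra k (FreeMonoid X) ⊗[k] MonoidAlgebra k (FreeMonoid X))
    (hone : Δ 1 = -(lam • ((1 : MonoidAlgebra k (FreeMonoid X))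
      ⊗ₜ[k] (1 : MonoidAlgebra k (FreeMonoid X)))))
    (hword : ∀ l : List X, l ≠ [] →
      Δ (word k l)
        = (∑ i ∈ Finset.range l.length,
            word k (l.take (i + 1)) ⊗ₜ[k] word k (l.drop i))
          + lam • ∑ i ∈ Finset.range (l.length - 1),
            word k (l.take (i + 1)) ⊗ₜ[k] word k (l.drop (i + 1)))
    {H : Type*} [Ring H] [Algebra k H]
    (ΔH : H →ₗ[k] H ⊗[k] H)
    (hcoassoc : ∀ h : H,
      (TensorProduct.assoc k H H H) (LinearMap.rTensor H ΔH (ΔH h))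
        = LinearMap.lTensor H ΔH (ΔH h))
    (hder : ∀ a b : H,
      ΔH (a * b) = (a ⊗ₜ[k] (1 : H)) * ΔH b + ΔH a * ((1 : H) ⊗ₜ[k] b)
        + lam • (a ⊗ₜ[k] b))
    (f : X → H) (hf : ∀ x : X, ΔH (f x) = f x ⊗ₜ[k] f x)
    (φ : MonoidAlgebra k (FreeMonoid X) →ₐ[k] H)
    (hφ : ∀ x : X, φ (word k [x]) = f x) :
    ∀ a : MonoidAlgebra k (FreeMonoid X),
      ΔH (φ a) = TensorProduct.map φ.toLinearMap φ.toLinearMap (Δ a) :=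
  algebra_hom_is_coalgebra_morphism_general lam Δ hone hword ΔH hder f hf φ hφ
end
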